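/- arXiv:2403.12804 — 3 statements merged into one kernel-verified Lean document; each statement's English description precedes it below -/
import Mathlib

section
/- Perron–Frobenius property in L²: let (Q, μ) be a measure space and A a bounded operator on L²(Q,μ) with strictly positive kernel, i.e. for every nonnegative F ∈ L² with F ≠ 0 one has AF > 0 almost surely. If λ = ‖A‖ is an eigenvalue of A and A is self-adjoint, then λ is a simple eigenvalue and the corresponding eigenvector can be chosen strictly positive almost surely. -/
/-!
If `A G = ‖A‖ • G`, then `‖A‖ ‖G‖² = ⟪A G, G⟫ ≤ ⟪A |G|, |G|⟫ ≤ ‖A‖ ‖G‖²` since `|A G| ≤ A |G|`, and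
equality in the Cauchy–Schwarz bound forces `A |G| = ‖A‖ • |G|`. Hence `|G| - G` and `|G| + G` are
nonnegative eigenvectors; positivity improving makes a nonzero one strictly positive a.e., and they
cannot both be, so `G = ±|G|` has a strict sign. An eigenvector orthogonal to a positive one would
have a strict sign too, contradicting orthogonality.
-/

open MeasureTheory Filter
open scoped RealInnerProductSpace

theorem HasSolidNorm.abs_eq_zero {α : Type*} [NormedAddCommGroup α] [Lattice α] [HasSolidNorm α]
    [IsOrderedAddMonoid α] {a : α} : |a| = 0 ↔ a = 0 := by
  rw [← norm_eq_zero, norm_abs_eq_norm, norm_eq_zero]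

theorem abs_map_le_map_abs {E F 𝓕 : Type*} [AddCommGroup E] [Lattice E] [IsOrderedAddMonoid E]
    [AddCommGroup F] [Lattice F] [IsOrderedAddMonoid F] [FunLike 𝓕 E F] [AddMonoidHomClass 𝓕 E F]
    (A : 𝓕) (hA : ∀ x, 0 ≤ x → 0 ≤ A x) (x : E) : |A x| ≤ A |x| := by
  have hle : ∀ y, A y ≤ A |y| := fun y => sub_nonneg.1 <| by
    rw [← map_sub]; exact hA _ (sub_nonneg.2 (le_abs_self y))
  exact abs_le'.2 ⟨hle x, by simpa only [map_neg, abs_neg] using hle (-x)⟩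

theorem ContinuousLinearMap.eq_opNorm_smul_of_le_inner {E : Type*} [NormedAddCommGroup E]
    [InnerProductSpace ℝ E] (A : E →L[ℝ] E) {x : E} (h : ‖A‖ * ‖x‖ ^ 2 ≤ ⟪A x, x⟫) :
    A x = ‖A‖ • x := by
  have hAx : ‖A x‖ ≤ ‖A‖ * ‖x‖ := A.le_opNorm x
  have hsq : ‖A x - ‖A‖ • x‖ ^ 2 ≤ 0 := by
    rw [norm_sub_sq_real, real_inner_smul_right, norm_smul, Real.norm_of_nonneg (norm_nonneg A)]
    nlinarith [norm_nonneg (A x), norm_nonneg A, norm_nonneg x]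
  exact sub_eq_zero.1 (norm_eq_zero.1 (pow_eq_zero_iff two_ne_zero |>.1
    (le_antisymm hsq (sq_nonneg _))))

namespace MeasureTheory

variable {Q : Type*} [MeasurableSpace Q] {μ : Measure Q}

theorem Lp.ae_neBot_of_ne_zero {E : Type*} [NormedAddCommGroup E] {p : ENNReal} {f : Lp E p μ}
    (hf : f ≠ 0) : (ae μ).NeBot := by
  refine ae_neBot.2 ?_
  rintro rfl
  exact hf (Lp.ext (by simp [EventuallyEq]))

theorem L2.inner_le_inner_of_abs_le {f g h k : Lp ℝ 2 μ} (hfh : |f| ≤ h) (hgk : |g| ≤ k) :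
    ⟪f, g⟫ ≤ ⟪h, k⟫ := by
  simp only [L2.inner_def, Real.inner_apply]
  refine integral_mono_ae
    (by simpa only [Real.inner_apply] using L2.integrable_inner (𝕜 := ℝ) f g)
    (by simpa only [Real.inner_apply] using L2.integrable_inner (𝕜 := ℝ) h k) ?_
  filter_upwards [(Lp.coeFn_le _ _).2 hfh, (Lp.coeFn_le _ _).2 hgk, Lp.coeFn_abs f,
    Lp.coeFn_abs g, (Lp.coeFn_nonneg _).2 (abs_nonneg f)] with q hf hg hf' hg' hf0
  rw [hf'] at hf hf0
  rw [hg'] at hg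
  calc f q * g q ≤ |f q| * |g q| := (le_abs_self _).trans (abs_mul _ _).le
    _ ≤ h q * k q := mul_le_mul hf hg (abs_nonneg _) ((abs_nonneg _).trans hf)

theorem L2.inner_pos_of_ae_pos {f g : Lp ℝ 2 μ} (hf0 : f ≠ 0) (hf : ∀ᵐ q ∂μ, 0 < f q)
    (hg : ∀ᵐ q ∂μ, 0 < g q) : 0 < ⟪f, g⟫ := by
  have := Lp.ae_neBot_of_ne_zero hf0
  have hfg : ∀ᵐ q ∂μ, 0 < f q * g q := by
    filter_upwards [hf, hg] with q hf hg using mul_pos hf hg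
  simp only [L2.inner_def, Real.inner_apply]
  rw [integral_pos_iff_support_of_nonneg_ae (hfg.mono fun _ h => h.le)
    (by simpa only [Real.inner_apply] using L2.integrable_inner (𝕜 := ℝ) f g), pos_iff_ne_zero,
    Ne, measure_eq_zero_iff_ae_notMem]
  intro hnot
  obtain ⟨q, hpos, hq⟩ := (hfg.and hnot).exists
  exact hq (Function.mem_support.2 hpos.ne')

variable {p : ENNReal} [Fact (1 ≤ p)]

def IsPositivityImproving (A : Lp ℝ p μ →L[ℝ] Lp ℝ p μ) : Prop :=
  ∀ F : Lp ℝ p μ, 0 ≤ F → F ≠ 0 → ∀ᵐ q ∂μ, 0 < A F q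

namespace IsPositivityImproving

section

variable {A : Lp ℝ p μ →L[ℝ] Lp ℝ p μ}

theorem map_nonneg (hA : IsPositivityImproving A) {F : Lp ℝ p μ} (hF : 0 ≤ F) : 0 ≤ A F := by
  rcases eq_or_ne F 0 with rfl | hF0
  · simp
  · exact (Lp.coeFn_nonneg _).1 ((hA F hF hF0).mono fun _ h => h.le)

theorem ae_pos_of_map_eq_smul (hA : IsPositivityImproving A) {F : Lp ℝ p μ} {c : ℝ} (hc : 0 ≤ c)
    (hF : 0 ≤ F) (hF0 : F ≠ 0) (hAF : A F = c • F) : ∀ᵐ q ∂μ, 0 < F q := by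
  filter_upwards [hA F hF hF0, Lp.coeFn_smul c F] with q hpos hsmul
  rw [hAF, hsmul] at hpos
  exact pos_of_mul_pos_right hpos hc

end

section

variable {A : Lp ℝ 2 μ →L[ℝ] Lp ℝ 2 μ} {G : Lp ℝ 2 μ}

theorem map_abs_eq_opNorm_smul (hA : IsPositivityImproving A) (hG : A G = ‖A‖ • G) :
    A |G| = ‖A‖ • |G| := by
  refine A.eq_opNorm_smul_of_le_inner ?_
  calc ‖A‖ * ‖|G|‖ ^ 2 = ⟪A G, G⟫ := by
        rw [hG, real_inner_smul_left, real_inner_self_eq_norm_sq, norm_abs_eq_norm]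
    _ ≤ ⟪A |G|, |G|⟫ :=
        L2.inner_le_inner_of_abs_le (abs_map_le_map_abs A (fun _ => hA.map_nonneg) G) le_rfl

theorem ae_pos_abs_of_eq_opNorm_smul (hA : IsPositivityImproving A) (hG : A G = ‖A‖ • G)
    (hG0 : G ≠ 0) :
    ∀ᵐ q ∂μ, 0 < (|G| : Lp ℝ 2 μ) q :=
  hA.ae_pos_of_map_eq_smul (norm_nonneg A) (abs_nonneg G) (mt HasSolidNorm.abs_eq_zero.1 hG0)
    (hA.map_abs_eq_opNorm_smul hG)

theorem eq_abs_or_eq_neg_abs (hA : IsPositivityImproving A) (hG : A G = ‖A‖ • G) :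
    G = |G| ∨ G = -|G| := by
  by_contra! h
  have hP : |G| - G ≠ 0 := sub_ne_zero.2 h.1.symm
  have hN : |G| + G ≠ 0 := fun h0 => h.2 (eq_neg_of_add_eq_zero_right h0)
  have hAabs := hA.map_abs_eq_opNorm_smul hG
  have hPpos := hA.ae_pos_of_map_eq_smul (norm_nonneg A) (sub_nonneg.2 (le_abs_self G)) hP
    (by rw [map_sub, hG, hAabs, smul_sub])
  have hNpos := hA.ae_pos_of_map_eq_smul (norm_nonneg A) (neg_le_iff_add_nonneg.1 (neg_le_abs G))
    hN (by rw [map_add, hG, hAabs, smul_add])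
  have hfalse : ∀ᵐ _ ∂μ, False := by
    filter_upwards [hPpos, hNpos, Lp.coeFn_sub |G| G, Lp.coeFn_add |G| G, Lp.coeFn_abs G]
      with q hPq hNq hsub hadd habs
    rw [hsub, Pi.sub_apply, habs] at hPq
    rw [hadd, Pi.add_apply, habs] at hNq
    cases abs_cases (G q) <;> linarith
  have := Lp.ae_neBot_of_ne_zero hP
  exact hfalse.exists.elim fun _ => id

theorem exists_eq_smul_of_eq_opNorm_smul (hA : IsPositivityImproving A) {Om : Lp ℝ 2 μ}
    (hOm : A Om = ‖A‖ • Om) (hOmpos : ∀ᵐ q ∂μ, 0 < Om q) (hG : A G = ‖A‖ • G) :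
    ∃ c : ℝ, G = c • Om := by
  obtain ⟨c, hc⟩ := Submodule.mem_span_singleton.1 ((ℝ ∙ Om).starProjection_apply_mem G)
  refine ⟨c, ?_⟩
  have hHOm : ⟪Om, G - c • Om⟫ = 0 := Submodule.mem_orthogonal_singleton_iff_inner_right.1
    (by rw [hc]; exact (ℝ ∙ Om).sub_starProjection_mem_orthogonal G)
  set H := G - c • Om
  have hHeig : A H = ‖A‖ • H := by
    rw [map_sub, map_smul, hG, hOm, smul_sub, smul_comm]
  by_contra hne
  have hH0 : H ≠ 0 := sub_ne_zero.2 hne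
  have hpos : 0 < ⟪Om, |H|⟫ := real_inner_comm Om |H| ▸
    L2.inner_pos_of_ae_pos (mt HasSolidNorm.abs_eq_zero.1 hH0)
      (hA.ae_pos_abs_of_eq_opNorm_smul hHeig hH0) hOmpos
  rcases hA.eq_abs_or_eq_neg_abs hHeig with h | h <;> rw [h] at hHOm
  · exact hpos.ne' hHOm
  · rw [inner_neg_right, neg_eq_zero] at hHOm
    exact hpos.ne' hHOm

end

end IsPositivityImproving

end MeasureTheory

theorem stmt8_general {Q : Type*} [MeasurableSpace Q] (μ : Measure Q)
    (A : Lp ℝ 2 μ →L[ℝ] Lp ℝ 2 μ)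
    (hposimp : ∀ F : Lp ℝ 2 μ, (∀ᵐ q ∂μ, 0 ≤ F q) → F ≠ 0 → ∀ᵐ q ∂μ, 0 < (A F) q)
    (heig : ∃ F : Lp ℝ 2 μ, F ≠ 0 ∧ A F = ‖A‖ • F) :
    ∃ Om : Lp ℝ 2 μ, Om ≠ 0 ∧ A Om = ‖A‖ • Om ∧ (∀ᵐ q ∂μ, 0 < Om q) ∧
      ∀ F : Lp ℝ 2 μ, A F = ‖A‖ • F → ∃ c : ℝ, F = c • Om := by
  obtain ⟨F0, hF0, hF0eig⟩ := heig
  have hA : IsPositivityImproving A := fun F hF => hposimp F ((Lp.coeFn_nonneg F).2 hF)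
  have hOm := hA.map_abs_eq_opNorm_smul hF0eig
  have hOmpos := hA.ae_pos_abs_of_eq_opNorm_smul hF0eig hF0
  exact ⟨|F0|, mt HasSolidNorm.abs_eq_zero.1 hF0, hOm, hOmpos,
    fun F hF => hA.exists_eq_smul_of_eq_opNorm_smul hOm hOmpos hF⟩

/-- Perron–Frobenius property in `L²`: let `(Q, μ)` be a σ-finite measure space and
`A` a bounded self-adjoint operator on `L²(Q,μ)` with strictly positive kernel
(positivity improving): for every nonnegative `F ≠ 0` one has `AF > 0` almost
everywhere.  If `λ = ‖A‖` is an eigenvalue of `A`, then it is simple and the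
corresponding eigenvector can be chosen strictly positive almost everywhere. -/
theorem stmt8 {Q : Type*} [MeasurableSpace Q] (μ : Measure Q) [SigmaFinite μ]
    (A : Lp ℝ 2 μ →L[ℝ] Lp ℝ 2 μ)
    (hsa : ∀ f g : Lp ℝ 2 μ, ⟪A f, g⟫ = ⟪f, A g⟫)
    (hposimp : ∀ F : Lp ℝ 2 μ, (∀ᵐ q ∂μ, 0 ≤ F q) → F ≠ 0 → ∀ᵐ q ∂μ, 0 < (A F) q)
    (heig : ∃ F : Lp ℝ 2 μ, F ≠ 0 ∧ A F = ‖A‖ • F) :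
    ∃ Om : Lp ℝ 2 μ, Om ≠ 0 ∧ A Om = ‖A‖ • Om ∧ (∀ᵐ q ∂μ, 0 < Om q) ∧
      ∀ F : Lp ℝ 2 μ, A F = ‖A‖ • F → ∃ c : ℝ, F = c • Om :=
  stmt8_general μ A hposimp heig
end

section
/- For a trace class operator A on a Hilbert space H, each exterior power Λᵏ A is trace class on Λᵏ H with ‖Λᵏ A‖_{tr} ≤ ‖A‖_{tr}^k / k!, and consequently z ↦ Σ_{k=0}^∞ z^k tr(Λᵏ A) defines an entire function bounded by |det_Fr(1+zA)| ≤ exp(|z|·‖A‖_{tr}). -/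
/-!
Every finite partial sum of the series defining `trLambda e A k` involves only finitely many
basis vectors `vₘ`, so it is a sum of principal `k × k` minors of the real matrix
`a = (⟪vₘ, A vₘ'⟫)`. Write `a = c dᵀ` with `d` orthogonal and the columns of `c` orthogonal of
lengths `sⱼ` (the singular values of `a`). Cauchy–Binet expands each minor of `a` into products of
minors of `c` and `d`; by Cauchy–Schwarz and Cauchy–Binet again, these are controlled by Gram
determinants, which gives `∑ |minors| ≤ (∑ sⱼ)^k`. The singular values are realised as
`⟪fⱼ, A gⱼ⟫` for orthonormal families `f`, `g`, so `∑ sⱼ ≤ ‖A‖_tr`. The resulting bound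
`|trLambda e A k| ≤ ‖A‖_tr^k / k!` makes the power series entire and dominated termwise by the
exponential series of `|z| ‖A‖_tr`.
-/

open scoped RealInnerProductSpace

/-- The set of finite sums `Σᵢ |⟨fᵢ, T gᵢ⟩|` over pairs of orthonormal families,
whose supremum is the trace norm of `T`. -/
def traceSet {H : Type*} [NormedAddCommGroup H] [InnerProductSpace ℝ H]
    (T : H →L[ℝ] H) : Set ℝ :=
  {r | ∃ (n : ℕ) (f g : Fin n → H), Orthonormal ℝ f ∧ Orthonormal ℝ g ∧
    r = ∑ i : Fin n, |⟪f i, T (g i)⟫|}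

/-- `T` is trace class iff the sums `Σᵢ |⟨fᵢ, T gᵢ⟩|` over orthonormal families are
uniformly bounded. -/
def IsTraceClass {H : Type*} [NormedAddCommGroup H] [InnerProductSpace ℝ H]
    (T : H →L[ℝ] H) : Prop :=
  BddAbove (traceSet T)

/-- The trace norm `‖T‖_tr`. -/
noncomputable def traceNorm {H : Type*} [NormedAddCommGroup H] [InnerProductSpace ℝ H]
    (T : H →L[ℝ] H) : ℝ :=
  sSup (traceSet T)

/-- `tr_{ΛᵏH}(ΛᵏT)`, expressed along a Hilbert basis `e` by the Gram-determinant
formula `(1/k!) Σ_{i₁,…,i_k} det [⟨e_{i_a}, T e_{i_b}⟩]_{a,b}`. -/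
noncomputable def trLambda {ι H : Type*} [NormedAddCommGroup H] [InnerProductSpace ℝ H]
    [CompleteSpace H] (e : HilbertBasis ι ℝ H) (T : H →L[ℝ] H) (k : ℕ) : ℝ :=
  ((k.factorial : ℝ))⁻¹ *
    ∑' i : Fin k → ι, Matrix.det (Matrix.of fun a b : Fin k => ⟪e (i a), T (e (i b))⟫)


namespace Matrix

variable {R m n : Type*} [CommRing R] [Fintype m] [DecidableEq m] [Fintype n]

theorem det_mul_eq_sum_prod_mul_det_submatrix (B : Matrix m n R) (C : Matrix n m R) :
    (B * C).det = ∑ t : m → n, (∏ r, B r (t r)) * (C.submatrix t id).det := by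
  have hrows : (B * C).det = detRowAlternating fun r => ∑ j, B r j • (C j : m → R) := by
    congr 1; ext r b; simp [mul_apply]
  have hsum := (detRowAlternating (R := R) (n := m)).toMultilinearMap.map_sum
    fun r j => B r j • (C j : m → R)
  simp only [AlternatingMap.coe_multilinearMap] at hsum
  rw [hrows, hsum]
  refine Finset.sum_congr rfl fun t _ => ?_
  exact (detRowAlternating (R := R) (n := m)).toMultilinearMap.map_smul_univ _ _

/-- Cauchy–Binet, summed over all maps `t` instead of over subsets: a non-injective `t` contributes
`0`, and every subset is the range of `(card m)!` injections. -/
theorem factorial_mul_det_mul (B : Matrix m n R) (C : Matrix n m R) :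
    ((Fintype.card m).factorial : R) * (B * C).det
      = ∑ t : m → n, (B.submatrix id t).det * (C.submatrix t id).det := by
  have hperm (σ : Equiv.Perm m) :
      ∑ t : m → n, (∏ r, B (σ r) (t r)) * (C.submatrix t id).det
        = ((Equiv.Perm.sign σ : ℤ) : R) * (B * C).det := by
    rw [← det_permute σ (B * C)]
    exact (det_mul_eq_sum_prod_mul_det_submatrix (B.submatrix σ id) C).symm
  have hsign (σ : Equiv.Perm m) :
      ((Equiv.Perm.sign σ : ℤ) : R) * ((Equiv.Perm.sign σ : ℤ) : R) = 1 := by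
    rw [← Int.cast_mul, ← Units.val_mul, Int.units_mul_self, Units.val_one, Int.cast_one]
  calc ((Fintype.card m).factorial : R) * (B * C).det
      = ∑ σ : Equiv.Perm m, ((Equiv.Perm.sign σ : ℤ) : R) *
          ∑ t : m → n, (∏ r, B (σ r) (t r)) * (C.submatrix t id).det := by
        simp_rw [hperm, ← mul_assoc, hsign, one_mul, Finset.sum_const, Finset.card_univ,
          Fintype.card_perm, nsmul_eq_mul]
    _ = ∑ t : m → n, (B.submatrix id t).det * (C.submatrix t id).det := by
        simp_rw [det_apply' (B.submatrix id _), Finset.sum_mul, Finset.mul_sum, mul_assoc]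
        exact Finset.sum_comm

theorem det_submatrix_diagonal_le {p : Type*} [DecidableEq p] (s : p → ℝ) (hs : 0 ≤ s)
    (t : m → p) : ((diagonal s).submatrix t t).det ≤ ∏ r, s (t r) := by
  by_cases ht : Function.Injective t
  · rw [submatrix_diagonal s t ht, det_diagonal]
    rfl
  · obtain ⟨r, r', hrr', hne⟩ := Function.not_injective_iff.mp ht
    rw [det_zero_of_row_eq hne (by ext; simp [hrr'])]
    exact Finset.prod_nonneg fun r _ => hs (t r)

theorem sum_sq_det_submatrix_le {p : Type*} [DecidableEq p] (c : Matrix n p ℝ)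
    (s : p → ℝ) (hs : 0 ≤ s) (hc : cᵀ * c = diagonal s) (t : m → p) :
    ∑ i : m → n, (c.submatrix i t).det ^ 2 ≤ (Fintype.card m).factorial * ∏ r, s (t r) := by
  have hgram : (c.submatrix id t)ᵀ * c.submatrix id t = (diagonal s).submatrix t t := by
    rw [← hc]; rfl
  calc ∑ i : m → n, (c.submatrix i t).det ^ 2
      = (Fintype.card m).factorial * ((c.submatrix id t)ᵀ * c.submatrix id t).det := by
        rw [factorial_mul_det_mul]
        refine Finset.sum_congr rfl fun i _ => ?_
        rw [sq]
        congr 1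
        exact (det_transpose _).symm
    _ ≤ (Fintype.card m).factorial * ∏ r, s (t r) := by
        rw [hgram]
        gcongr
        exact det_submatrix_diagonal_le s hs t

theorem sum_abs_det_submatrix_mul_abs_det_submatrix_le {p : Type*} [DecidableEq p]
    (c d : Matrix n p ℝ) (s : p → ℝ) (hs : 0 ≤ s) (hc : cᵀ * c = diagonal (s ^ 2))
    (hd : dᵀ * d = 1) (t : m → p) :
    ∑ i : m → n, |(c.submatrix i t).det| * |(d.submatrix i t).det|
      ≤ (Fintype.card m).factorial * ∏ r, s (t r) := by
  have hK : (0 : ℝ) ≤ (Fintype.card m).factorial := by positivity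
  have hcs := Finset.sum_mul_sq_le_sq_mul_sq Finset.univ
    (fun i : m → n => |(c.submatrix i t).det|) (fun i => |(d.submatrix i t).det|)
  simp only [sq_abs] at hcs
  refine le_of_sq_le_sq (hcs.trans ?_) (mul_nonneg hK (Finset.prod_nonneg fun r _ => hs (t r)))
  have hc' := sum_sq_det_submatrix_le c (s ^ 2) (fun j => sq_nonneg (s j)) hc t
  have hd' := sum_sq_det_submatrix_le d 1 zero_le_one (hd.trans diagonal_one.symm) t
  simp only [Pi.pow_apply, Finset.prod_pow, Pi.one_apply, Finset.prod_const_one,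
    mul_one] at hc' hd'
  calc _ ≤ ((Fintype.card m).factorial * (∏ r, s (t r)) ^ 2) * (Fintype.card m).factorial :=
        mul_le_mul hc' hd' (Finset.sum_nonneg fun _ _ => sq_nonneg _)
          (mul_nonneg hK (sq_nonneg _))
    _ = ((Fintype.card m).factorial * ∏ r, s (t r)) ^ 2 := by ring

theorem sum_abs_det_submatrix_mul_transpose_le {p : Type*} [Fintype p] [DecidableEq p]
    (c d : Matrix n p ℝ) (s : p → ℝ) (hs : 0 ≤ s) (hc : cᵀ * c = diagonal (s ^ 2))
    (hd : dᵀ * d = 1) :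
    ∑ i : m → n, |((c * dᵀ).submatrix i i).det| ≤ (∑ j, s j) ^ Fintype.card m := by
  set K : ℝ := ((Fintype.card m).factorial : ℝ)
  have hK : 0 < K := by positivity
  have hbinet (i : m → n) : K * ((c * dᵀ).submatrix i i).det
      = ∑ t : m → p, (c.submatrix i t).det * (d.submatrix i t).det := by
    rw [show (c * dᵀ).submatrix i i = c.submatrix i id * (d.submatrix i id)ᵀ from rfl,
      factorial_mul_det_mul]
    refine Finset.sum_congr rfl fun t _ => ?_
    congr 1
    exact det_transpose (d.submatrix i t)
  refine le_of_mul_le_mul_left ?_ hK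
  calc K * ∑ i : m → n, |((c * dᵀ).submatrix i i).det|
      = ∑ i : m → n, |∑ t : m → p, (c.submatrix i t).det * (d.submatrix i t).det| := by
        rw [Finset.mul_sum]
        refine Finset.sum_congr rfl fun i _ => ?_
        rw [← hbinet, abs_mul, abs_of_pos hK]
    _ ≤ ∑ t : m → p, ∑ i : m → n, |(c.submatrix i t).det| * |(d.submatrix i t).det| := by
        rw [Finset.sum_comm]
        gcongr with i
        exact (Finset.abs_sum_le_sum_abs _ _).trans_eq (by simp only [abs_mul])
    _ ≤ ∑ t : m → p, K * ∏ r, s (t r) := Finset.sum_le_sum fun t _ =>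
        sum_abs_det_submatrix_mul_abs_det_submatrix_le c d s hs hc hd t
    _ = K * (∑ j, s j) ^ Fintype.card m := by
        rw [← Finset.mul_sum, ← Fintype.prod_sum, Finset.prod_const, Finset.card_univ]

/-- Singular value decomposition `a = (a * w) * wᵀ`, from the spectral theorem for `aᵀ * a`. -/
theorem exists_orthogonal_gram_mul_eq_diagonal [DecidableEq n] (a : Matrix n n ℝ) :
    ∃ (w : Matrix n n ℝ) (s : n → ℝ), 0 ≤ s ∧ w * wᵀ = 1 ∧ wᵀ * w = 1 ∧
      (a * w)ᵀ * (a * w) = diagonal (s ^ 2) := by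
  have hpsd : (aᵀ * a).PosSemidef := by simpa using posSemidef_conjTranspose_mul_self a
  set U := hpsd.1.eigenvectorUnitary
  have hU := U.2
  refine ⟨U, fun j => √(hpsd.1.eigenvalues j), fun j => Real.sqrt_nonneg _,
    mem_unitaryGroup_iff.mp hU, mem_unitaryGroup_iff'.mp hU, ?_⟩
  have hdiag := hpsd.1.conjStarAlgAut_star_eigenvectorUnitary
  rw [Unitary.conjStarAlgAut_apply] at hdiag
  simp only [Unitary.coe_star, star_eq_conjTranspose, conjTranspose_eq_transpose_of_trivial,
    RCLike.ofReal_real_eq_id, Function.id_comp] at hdiag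
  have hsq : (fun j => √(hpsd.1.eigenvalues j)) ^ 2 = hpsd.1.eigenvalues :=
    funext fun j => Real.sq_sqrt (hpsd.eigenvalues_nonneg j)
  rw [hsq, ← hdiag, transpose_mul]
  noncomm_ring

end Matrix

section TraceClass

open Matrix

variable {H : Type*} [NormedAddCommGroup H] [InnerProductSpace ℝ H]

theorem traceNorm_nonneg {A : H →L[ℝ] H} (hA : IsTraceClass A) : 0 ≤ traceNorm A :=
  le_csSup hA ⟨0, Fin.elim0, Fin.elim0, orthonormal_iff_ite.mpr finZeroElim,
    orthonormal_iff_ite.mpr finZeroElim, by simp⟩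

theorem sum_abs_inner_le_traceNorm {A : H →L[ℝ] H} (hA : IsTraceClass A) {κ : Type*}
    [Fintype κ] {f g : κ → H} (hf : Orthonormal ℝ f) (hg : Orthonormal ℝ g) :
    ∑ j, |⟪f j, A (g j)⟫| ≤ traceNorm A := by
  let σ := (Fintype.equivFin κ).symm
  refine le_csSup hA ⟨Fintype.card κ, f ∘ σ, g ∘ σ, hf.comp σ σ.injective,
    hg.comp σ σ.injective, ?_⟩
  exact (Fintype.sum_equiv σ _ _ fun _ => rfl).symm

def compressionMatrix {n : Type*} (T : H →L[ℝ] H) (v : n → H) : Matrix n n ℝ :=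
  Matrix.of fun m m' => ⟪v m, T (v m')⟫

theorem inner_sum_smul_apply_sum_smul {n p : Type*} [Fintype n] (T : H →L[ℝ] H) (v : n → H)
    (M N : Matrix n p ℝ) (j j' : p) :
    ⟪∑ m, M m j • v m, T (∑ m, N m j' • v m)⟫ = (Mᵀ * compressionMatrix T v * N) j j' := by
  simp only [map_sum, map_smul, sum_inner, inner_sum, real_inner_smul_left,
    real_inner_smul_right, Matrix.mul_apply, Matrix.transpose_apply, compressionMatrix,
    Matrix.of_apply, Finset.sum_mul]
  exact Finset.sum_congr rfl fun _ _ => Finset.sum_congr rfl fun _ _ => by ring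

theorem Orthonormal.inner_sum_smul_sum_smul {n p : Type*} [Fintype n] {v : n → H}
    (hv : Orthonormal ℝ v) (M N : Matrix n p ℝ) (j j' : p) :
    ⟪∑ m, M m j • v m, ∑ m, N m j' • v m⟫ = (Mᵀ * N) j j' := by
  rw [hv.inner_sum]
  rfl

theorem sum_abs_le_traceNorm_of_gram_eq_diagonal {n p : Type*} [Fintype n] [Fintype p]
    [DecidableEq p] {A : H →L[ℝ] H} (hA : IsTraceClass A) {v : n → H} (hv : Orthonormal ℝ v)
    {w : Matrix n p ℝ} {s : p → ℝ} (hw : wᵀ * w = 1)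
    (hc : (compressionMatrix A v * w)ᵀ * (compressionMatrix A v * w) = diagonal (s ^ 2)) :
    ∑ j, |s j| ≤ traceNorm A := by
  let g : p → H := fun j => ∑ m, w m j • v m
  let f : {j // s j ≠ 0} → H := fun j => (s j)⁻¹ • ∑ m, (compressionMatrix A v * w) m j • v m
  have hg : Orthonormal ℝ g := by
    refine orthonormal_iff_ite.mpr fun j j' => ?_
    rw [hv.inner_sum_smul_sum_smul, hw, one_apply]
  have hf : Orthonormal ℝ f := by
    refine orthonormal_iff_ite.mpr fun j j' => ?_
    rw [real_inner_smul_left, real_inner_smul_right, hv.inner_sum_smul_sum_smul, hc]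
    rcases eq_or_ne j j' with rfl | h
    · rw [diagonal_apply_eq, if_pos rfl, Pi.pow_apply]
      field_simp [j.2]
    · rw [diagonal_apply_ne _ (Subtype.coe_ne_coe.mpr h), if_neg h, mul_zero, mul_zero]
  have hfg (j : {j // s j ≠ 0}) : ⟪f j, A (g j)⟫ = s j := by
    rw [real_inner_smul_left, inner_sum_smul_apply_sum_smul, Matrix.mul_assoc, hc,
      diagonal_apply_eq, Pi.pow_apply, sq, inv_mul_cancel_left₀ j.2]
  calc ∑ j, |s j| = ∑ j : {j // s j ≠ 0}, |s j| :=
        (Finset.sum_filter_of_ne fun j _ hj => abs_ne_zero.mp hj).symm.trans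
          (Finset.sum_subtype _ (by simp) _)
    _ = ∑ j, |⟪f j, A (g j)⟫| := by simp only [hfg]
    _ ≤ traceNorm A := sum_abs_inner_le_traceNorm hA hf (hg.comp _ Subtype.val_injective)

theorem sum_abs_det_submatrix_compressionMatrix_le {n : Type*} [Fintype n] [DecidableEq n]
    {A : H →L[ℝ] H} (hA : IsTraceClass A) {v : n → H} (hv : Orthonormal ℝ v) (m : Type*)
    [Fintype m] [DecidableEq m] :
    ∑ t : m → n, |((compressionMatrix A v).submatrix t t).det|
      ≤ traceNorm A ^ Fintype.card m := by
  obtain ⟨w, s, hs, hwwt, hwtw, hc⟩ :=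
    exists_orthogonal_gram_mul_eq_diagonal (compressionMatrix A v)
  have hsum : ∑ j, s j ≤ traceNorm A := by
    simpa only [abs_of_nonneg (hs _)] using sum_abs_le_traceNorm_of_gram_eq_diagonal hA hv hwtw hc
  have hfac : compressionMatrix A v = compressionMatrix A v * w * wᵀ := by
    rw [Matrix.mul_assoc, hwwt, Matrix.mul_one]
  rw [hfac]
  exact (sum_abs_det_submatrix_mul_transpose_le _ w s hs hc hwtw).trans
    (pow_le_pow_left₀ (Finset.sum_nonneg fun j _ => hs j) hsum _)

theorem abs_sum_det_le_traceNorm_pow {ι : Type*} {A : H →L[ℝ] H} (hA : IsTraceClass A)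
    {e : ι → H} (he : Orthonormal ℝ e) (k : ℕ) (S : Finset (Fin k → ι)) :
    |∑ i ∈ S, (Matrix.of fun a b : Fin k => ⟪e (i a), A (e (i b))⟫).det| ≤ traceNorm A ^ k := by
  classical
  let minor : (Fin k → ι) → ℝ := fun i => (Matrix.of fun a b => ⟪e (i a), A (e (i b))⟫).det
  let F : Finset ι := S.biUnion fun i => Finset.univ.image i
  let lift : (Fin k → F) → Fin k → ι := fun t r => t r
  have hS : S ⊆ Finset.univ.image lift := fun i hi =>
    Finset.mem_image.mpr ⟨fun r => ⟨i r, Finset.mem_biUnion.mpr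
      ⟨i, hi, Finset.mem_image_of_mem i (Finset.mem_univ r)⟩⟩, Finset.mem_univ _, rfl⟩
  have hlift : Function.Injective lift := fun t t' h =>
    funext fun r => Subtype.ext (congrFun h r)
  calc |∑ i ∈ S, minor i| ≤ ∑ i ∈ S, |minor i| := Finset.abs_sum_le_sum_abs _ _
    _ ≤ ∑ i ∈ Finset.univ.image lift, |minor i| :=
        Finset.sum_le_sum_of_subset_of_nonneg hS fun _ _ _ => abs_nonneg _
    _ = ∑ t, |minor (lift t)| := Finset.sum_image fun t _ t' _ h => hlift h
    _ ≤ traceNorm A ^ Fintype.card (Fin k) :=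
        sum_abs_det_submatrix_compressionMatrix_le hA (he.comp _ Subtype.val_injective) (Fin k)
    _ = traceNorm A ^ k := by rw [Fintype.card_fin]

/-- Covers the non-summable case, where `tsum` is `0`. -/
theorem abs_tsum_le_of_forall_abs_sum_le {β : Type*} {f : β → ℝ} {c : ℝ} (hc : 0 ≤ c)
    (h : ∀ S : Finset β, |∑ i ∈ S, f i| ≤ c) : |∑' i, f i| ≤ c := by
  refine abs_le.mpr ⟨?_, tsum_le_of_sum_le' hc fun S => (le_abs_self _).trans (h S)⟩
  rw [neg_le, ← tsum_neg]
  exact tsum_le_of_sum_le' hc fun S => by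
    simpa only [Finset.sum_neg_distrib] using (neg_le_abs _).trans (h S)

theorem abs_trLambda_le {ι : Type*} [CompleteSpace H] (e : HilbertBasis ι ℝ H)
    {A : H →L[ℝ] H} (hA : IsTraceClass A) (k : ℕ) :
    |trLambda e A k| ≤ traceNorm A ^ k / k.factorial := by
  rw [trLambda, abs_mul, abs_inv, Nat.abs_cast, inv_mul_eq_div]
  gcongr
  exact abs_tsum_le_of_forall_abs_sum_le (pow_nonneg (traceNorm_nonneg hA) k)
    (abs_sum_det_le_traceNorm_pow hA e.orthonormal k)

end TraceClass

section ExponentialType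

variable {c : ℕ → ℂ} {M : ℝ}

theorem norm_pow_mul_le_of_norm_le (hc : ∀ k, ‖c k‖ ≤ M ^ k / k.factorial) (z : ℂ) (k : ℕ) :
    ‖z ^ k * c k‖ ≤ (‖z‖ * M) ^ k / k.factorial := by
  rw [norm_mul, norm_pow, mul_pow, mul_div_assoc]
  gcongr
  exact hc k

theorem summable_norm_pow_mul_of_norm_le (hc : ∀ k, ‖c k‖ ≤ M ^ k / k.factorial) (z : ℂ) :
    Summable fun k => ‖z ^ k * c k‖ :=
  .of_nonneg_of_le (fun _ => norm_nonneg _) (norm_pow_mul_le_of_norm_le hc z)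
    (Real.summable_pow_div_factorial _)

theorem analyticOnNhd_tsum_pow_mul_of_norm_le (hc : ∀ k, ‖c k‖ ≤ M ^ k / k.factorial) :
    AnalyticOnNhd ℂ (fun z => ∑' k, z ^ k * c k) Set.univ := by
  let p := FormalMultilinearSeries.ofScalars ℂ c
  have hrad : p.radius = ⊤ := p.radius_eq_top_of_summable_norm fun r => by
    simpa only [p, FormalMultilinearSeries.ofScalars_norm, norm_mul, norm_pow, Complex.norm_real,
      NNReal.norm_eq, mul_comm] using summable_norm_pow_mul_of_norm_le hc r
  have hp := (p.hasFPowerSeriesOnBall (by simp [hrad])).analyticOnNhd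
  rw [hrad, Metric.eball_top_eq_univ] at hp
  refine hp.congr isOpen_univ fun z _ => ?_
  simp only [FormalMultilinearSeries.sum, p, FormalMultilinearSeries.ofScalars_apply_eq,
    smul_eq_mul, mul_comm]

theorem norm_tsum_pow_mul_le_exp (hc : ∀ k, ‖c k‖ ≤ M ^ k / k.factorial) (z : ℂ) :
    ‖∑' k, z ^ k * c k‖ ≤ Real.exp (‖z‖ * M) := by
  rw [Real.exp_eq_exp_ℝ, NormedSpace.exp_eq_tsum_div]
  exact tsum_of_norm_bounded (Real.summable_pow_div_factorial _).hasSum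
    (norm_pow_mul_le_of_norm_le hc z)

end ExponentialType

/-- For a trace class operator `A`: each exterior power has trace bounded by
`‖A‖_tr^k / k!`, and consequently `z ↦ Σ_k z^k tr(ΛᵏA)` defines an entire function
with `|det_Fr(1 + zA)| ≤ exp(|z| ‖A‖_tr)`. -/
theorem stmt11 {ι H : Type*} [NormedAddCommGroup H] [InnerProductSpace ℝ H]
    [CompleteSpace H] (e : HilbertBasis ι ℝ H) (A : H →L[ℝ] H)
    (hA : IsTraceClass A) :
    (∀ k : ℕ, |trLambda e A k| ≤ traceNorm A ^ k / (k.factorial : ℝ)) ∧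
    AnalyticOn ℂ (fun z : ℂ => ∑' k : ℕ, z ^ k * (trLambda e A k : ℂ)) Set.univ ∧
    (∀ z : ℂ, ‖∑' k : ℕ, z ^ k * (trLambda e A k : ℂ)‖ ≤
      Real.exp (‖z‖ * traceNorm A)) := by
  have hbound : ∀ k, ‖(trLambda e A k : ℂ)‖ ≤ traceNorm A ^ k / k.factorial := fun k => by
    simpa only [Complex.norm_real, Real.norm_eq_abs] using abs_trLambda_le e hA k
  exact ⟨abs_trLambda_le e hA, (analyticOnNhd_tsum_pow_mul_of_norm_le hbound).analyticOn,
    norm_tsum_pow_mul_le_exp hbound⟩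
end

section
/- Shift of a Gaussian measure by resolvent identity: if C_D and C_N denote the resolvents (Δ_{Ω,D}+m²)^{−1} and (Δ_{Ω,N}+m²)^{−1} of the Laplacian on a compact Riemannian manifold Ω with boundary, with Dirichlet and Neumann conditions respectively, then PI·(DN)^{−1}·PI* = C_N − C_D as operators on compactly supported smooth functions, where PI is the Poisson integral operator from ∂Ω and DN the Dirichlet-to-Neumann operator; consequently C_N ≥ C_D as quadratic forms. -/
/-!
`V` models functions on `Ω`, `B` functions on `∂Ω`; `L = Δ + m²`, `τ` is the boundary trace and
`dν` the normal derivative. The function `u = C_D f + PI (DN⁻¹ (PI* f))` satisfies `L u = f`, and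
its normal derivative is `∂_ν C_D f + DN (DN⁻¹ (−∂_ν C_D f)) = 0`, so `u = C_N f` by uniqueness of
the Neumann problem. Green's formula then turns `⟪f, (C_N − C_D) f⟫` into `⟪PI* f, DN⁻¹ (PI* f)⟫`,
which is nonnegative.
-/

open scoped RealInnerProductSpace

theorem poisson_dnInv_poissonAdjoint_eq_sub {R V B : Type*} [Ring R]
    [AddCommGroup V] [Module R V] [AddCommGroup B] [Module R B]
    (L : V →ₗ[R] V) (dν : V →ₗ[R] B) (CD CN : V →ₗ[R] V) (PI : B →ₗ[R] V)
    (DN DNinv : B →ₗ[R] B) (PIstar : V →ₗ[R] B)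
    (hCD : ∀ f, L (CD f) = f) (hCN : ∀ f, L (CN f) = f ∧ dν (CN f) = 0)
    (hPI : ∀ φ, L (PI φ) = 0) (hDN : ∀ φ, DN φ = dν (PI φ))
    (hDNinv : ∀ φ, DN (DNinv φ) = φ) (hPIstar : ∀ f, PIstar f = -(dν (CD f)))
    (huniq : ∀ u v, L u = L v → dν u = dν v → u = v) (f : V) :
    PI (DNinv (PIstar f)) = CN f - CD f := by
  have hsum : CD f + PI (DNinv (PIstar f)) = CN f := by
    apply huniq
    · rw [map_add, hCD, hPI, (hCN f).1, add_zero]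
    · rw [map_add, ← hDN, hDNinv, hPIstar, (hCN f).2, add_neg_cancel]
  exact eq_sub_of_add_eq' hsum

/-- Abstract form of the resolvent identity `PI ∘ DN⁻¹ ∘ PI* = C_N − C_D` and the
resulting comparison `C_N ≥ C_D`.  Here `V` plays the role of functions on a compact
Riemannian manifold `Ω` with boundary, `B` of functions on `∂Ω`; `L = Δ + m²`,
`τ` the boundary trace, `dν` the outward normal derivative at the boundary, `C_D`
and `C_N` the Dirichlet and Neumann resolvents, `PI` the Poisson integral operator,
`DN` the Dirichlet-to-Neumann operator with inverse `DNinv`, and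
`PI* = −∂_ν ∘ C_D` its adjoint (Green's formula `⟨f, PI φ⟩ = ⟨PI* f, φ⟩`).
Positivity of `DN⁻¹` (equivalently of `DN`) yields `⟨f, (C_N − C_D) f⟩ ≥ 0`. -/
theorem stmt18 {V B : Type*} [NormedAddCommGroup V] [InnerProductSpace ℝ V]
    [NormedAddCommGroup B] [InnerProductSpace ℝ B]
    (L : V →ₗ[ℝ] V) (τ dν : V →ₗ[ℝ] B)
    (CD CN : V →ₗ[ℝ] V) (PI : B →ₗ[ℝ] V) (DN DNinv : B →ₗ[ℝ] B)
    (PIstar : V →ₗ[ℝ] B)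
    (hCD : ∀ f : V, L (CD f) = f ∧ τ (CD f) = 0)
    (hCN : ∀ f : V, L (CN f) = f ∧ dν (CN f) = 0)
    (hPI : ∀ φ : B, L (PI φ) = 0 ∧ τ (PI φ) = φ)
    (hDN : ∀ φ : B, DN φ = dν (PI φ))
    (hDNinv : ∀ φ : B, DN (DNinv φ) = φ)
    (hPIstar : ∀ f : V, PIstar f = -(dν (CD f)))
    (huniq : ∀ u v : V, L u = L v → dν u = dν v → u = v)
    (hadj : ∀ (f : V) (φ : B), ⟪f, PI φ⟫ = ⟪PIstar f, φ⟫)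
    (hDNinvpos : ∀ φ : B, 0 ≤ ⟪φ, DNinv φ⟫) :
    (∀ f : V, PI (DNinv (PIstar f)) = CN f - CD f) ∧
    (∀ f : V, 0 ≤ ⟪f, CN f - CD f⟫) := by
  have hres : ∀ f, PI (DNinv (PIstar f)) = CN f - CD f :=
    poisson_dnInv_poissonAdjoint_eq_sub L dν CD CN PI DN DNinv PIstar (fun f => (hCD f).1) hCN
      (fun φ => (hPI φ).1) hDN hDNinv hPIstar huniq
  refine ⟨hres, fun f => ?_⟩
  rw [← hres, hadj]
  exact hDNinvpos _
end
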